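/- arXiv:2401.00302 — 3 statements merged into one kernel-verified Lean document; each statement's English description precedes it below -/
import Mathlib

section
/- In the setting below, every copy C ∈ P(L) intersects κ-many summands: the set {α < κ : C ∩ L_α ≠ ∅} has cardinality κ. -/
/-! A strictly monotone self-map `f` of an ordinal satisfies `x ≤ f x`, so a copy `C` of `ω^δ`
has points above every point of `ω^δ`. As the summands `L_α` are consecutive and nonempty, the
summand containing such a point of `C` above a point of `L_β` has index at least `β`; hence the
indices of the summands met by `C` are cofinal in `κ`, and there are at least `cf κ = κ` of them. -/

open Ordinal Set Cardinal

/-- The set of copies of an ordinal `a`: subsets of the interval `[0, a)` that are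
ranges of order-embeddings of `Iio a` into itself. -/
def Copies (a : Ordinal.{0}) : Set (Set Ordinal.{0}) :=
  {A | ∃ f : Set.Iio a ↪o Set.Iio a, A = Subtype.val '' Set.range ⇑f}

theorem subset_Iio_of_mem_copies {a : Ordinal.{0}} {C : Set Ordinal.{0}} (hC : C ∈ Copies a) :
    C ⊆ Iio a := by
  obtain ⟨f, rfl⟩ := hC
  rintro _ ⟨x, -, rfl⟩
  exact x.2

theorem isCofinalFor_Iio_of_mem_copies {a : Ordinal.{0}} {C : Set Ordinal.{0}}
    (hC : C ∈ Copies a) : IsCofinalFor (Iio a) C := by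
  obtain ⟨f, rfl⟩ := hC
  intro y hy
  exact ⟨f ⟨y, hy⟩, ⟨_, mem_range_self _, rfl⟩, f.strictMono.le_apply (x := ⟨y, hy⟩)⟩

theorem isCofinalFor_setOf_inter_nonempty {ι X : Type*} [LinearOrder ι] [Preorder X]
    {L : ι → Set X} {o : ι}
    (hconv : ∀ α < o, ∀ β < o, α < β → ∀ x ∈ L α, ∀ y ∈ L β, x < y)
    (hne : ∀ α < o, (L α).Nonempty) {C : Set X} (hCU : C ⊆ ⋃ α ∈ Iio o, L α)
    (hC : IsCofinalFor (⋃ α ∈ Iio o, L α) C) :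
    IsCofinalFor (Iio o) {α | α < o ∧ (C ∩ L α).Nonempty} := by
  intro β hβ
  obtain ⟨y, hy⟩ := hne β hβ
  obtain ⟨c, hcC, hyc⟩ := hC (mem_biUnion hβ hy)
  obtain ⟨α, hα, hcα⟩ := mem_iUnion₂.1 (hCU hcC)
  exact ⟨α, ⟨hα, c, hcC, hcα⟩,
    not_lt.1 fun hαβ => (hconv α hα β hβ hαβ c hcα y hy).not_ge hyc⟩

theorem Ordinal.lift_cof_le_mk_of_isCofinalFor {o : Ordinal.{u}} {S : Set Ordinal.{u}}
    (hSo : S ⊆ Iio o) (hS : IsCofinalFor (Iio o) S) : Cardinal.lift.{u + 1} o.cof ≤ #S := by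
  have hcof : IsCofinal (Subtype.val ⁻¹' S : Set (Iio o)) := fun β => by
    obtain ⟨α, hαS, hβα⟩ := hS β.2
    exact ⟨⟨α, hSo hαS⟩, hαS, hβα⟩
  calc Cardinal.lift.{u + 1} o.cof = Order.cof (Iio o) := by rw [cof_Iio, lift_cof]
    _ ≤ #(Subtype.val ⁻¹' S : Set (Iio o)) := Order.cof_le hcof
    _ ≤ #S := mk_preimage_of_injective _ _ Subtype.val_injective

theorem Cardinal.mk_eq_lift_of_isCofinalFor_Iio_ord {κ : Cardinal.{u}} (hκ : κ.ord.cof = κ)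
    {S : Set Ordinal.{u}} (hSκ : S ⊆ Iio κ.ord) (hS : IsCofinalFor (Iio κ.ord) S) :
    #S = Cardinal.lift.{u + 1} κ := by
  refine le_antisymm ?_ ?_
  · simpa only [mk_Iio_ordinal, card_ord] using mk_le_mk_of_subset hSκ
  · simpa only [hκ] using Ordinal.lift_cof_le_mk_of_isCofinalFor hSκ hS

theorem stmt10_general (δ : Ordinal.{0}) (κc : Cardinal.{0})
    (hκ : (ω ^ δ).cof = κc)
    (δf : Ordinal → Ordinal)
    (Lset : Ordinal → Set Ordinal)
    (hconv : ∀ α < κc.ord, ∀ β < κc.ord, α < β →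
      ∀ x ∈ Lset α, ∀ y ∈ Lset β, x < y)
    (hiso : ∀ α < κc.ord, Nonempty (↥(Lset α) ≃o ↥(Set.Iio (ω ^ δf α))))
    (hunion : ⋃ α ∈ Set.Iio κc.ord, Lset α = Set.Iio (ω ^ δ))
    (C : Set Ordinal) (hC : C ∈ Copies (ω ^ δ)) :
    Cardinal.mk ↥{α : Ordinal | α < κc.ord ∧ (C ∩ Lset α).Nonempty} =
      Cardinal.lift.{1} κc := by
  have hne : ∀ α < κc.ord, (Lset α).Nonempty := fun α hα =>
    let ⟨e⟩ := hiso α hα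
    ⟨e.symm ⟨0, opow_pos _ omega0_pos⟩, (e.symm _).2⟩
  have hcof : IsCofinalFor (Iio κc.ord) {α | α < κc.ord ∧ (C ∩ Lset α).Nonempty} :=
    isCofinalFor_setOf_inter_nonempty hconv hne (hunion ▸ subset_Iio_of_mem_copies hC)
      (hunion ▸ isCofinalFor_Iio_of_mem_copies hC)
  exact mk_eq_lift_of_isCofinalFor_Iio_ord (by rw [← hκ, cof_ord_cof]) (fun _ h => h.1) hcof

/-- Setting: `κ = cf(ω^δ)`, `⟨δ_α : α<κ⟩` a nondecreasing sequence of nonzero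
ordinals with `Σ_{α<κ} ω^{δ_α} = ω^δ`, realized by a partition of `[0, ω^δ)` into
consecutive intervals `L_α` of order type `ω^{δ_α}`. Then every copy `C` of `ω^δ`
meets `κ`-many summands `L_α`. -/
theorem stmt10 (δ : Ordinal.{0}) (hδ : 0 < δ) (κc : Cardinal.{0})
    (hκ : (ω ^ δ).cof = κc)
    (δf : Ordinal → Ordinal)
    (hpos : ∀ α < κc.ord, 0 < δf α)
    (hmono : ∀ α β : Ordinal, α ≤ β → β < κc.ord → δf α ≤ δf β)
    (Lset : Ordinal → Set Ordinal)
    (hconv : ∀ α < κc.ord, ∀ β < κc.ord, α < β →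
      ∀ x ∈ Lset α, ∀ y ∈ Lset β, x < y)
    (hiso : ∀ α < κc.ord, Nonempty (↥(Lset α) ≃o ↥(Set.Iio (ω ^ δf α))))
    (hunion : ⋃ α ∈ Set.Iio κc.ord, Lset α = Set.Iio (ω ^ δ))
    (C : Set Ordinal) (hC : C ∈ Copies (ω ^ δ)) :
    Cardinal.mk ↥{α : Ordinal | α < κc.ord ∧ (C ∩ Lset α).Nonempty} =
      Cardinal.lift.{1} κc :=
  stmt10_general δ κc hκ δf Lset hconv hiso hunion C hC
end

section
/- In the setting below, a subset C ⊆ L is a copy of L (C ∈ P(L)) if and only if for all α, η < κ there is a set K ⊆ κ ∖ η with |K| < κ such that L_α order-embeds into the suborder (⋃_{β∈K} L_β) ∩ C of L. -/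
open Ordinal Set Cardinal

def Set.inclusionOrderEmbedding {α : Type*} [PartialOrder α] {s t : Set α} (h : s ⊆ t) : s ↪o t :=
  OrderEmbedding.ofMapLEIff (Set.inclusion h) fun _ _ => Iff.rfl

theorem mem_copies_iff {a : Ordinal.{0}} {C : Set Ordinal.{0}} (hC : C ⊆ Iio a) :
    C ∈ Copies a ↔ Nonempty (Iio a ↪o C) := by
  constructor
  · rintro ⟨f, rfl⟩
    exact ⟨.ofStrictMono (fun x => ⟨f x, mem_image_of_mem _ (mem_range_self x)⟩)
      fun _ _ h => f.strictMono h⟩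
  · rintro ⟨E⟩
    let e : Iio a ≃o C := OrderIso.ofRelIsoLT <|
      E.ltEmbedding.collapse.antisymm (Set.inclusionOrderEmbedding hC).ltEmbedding.collapse
    refine ⟨e.toOrderEmbedding.trans (Set.inclusionOrderEmbedding hC), ?_⟩
    ext x
    refine ⟨fun hx => ⟨⟨x, hC hx⟩, ⟨e.symm ⟨x, hx⟩, by simp [Set.inclusionOrderEmbedding]⟩, rfl⟩,
      ?_⟩
    rintro ⟨_, ⟨y, rfl⟩, rfl⟩
    exact (e y).2

def IsStackedOn {ι α : Type*} [LT ι] [LT α] (I : Set ι) (A : ι → Set α) : Prop :=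
  ∀ i ∈ I, ∀ j ∈ I, i < j → ∀ x ∈ A i, ∀ y ∈ A j, x < y

namespace IsStackedOn

variable {ι κ α β : Type*} {I : Set ι}

theorem mono [LT ι] [LT α] {A B : ι → Set α} (hA : IsStackedOn I A) (hBA : ∀ i ∈ I, B i ⊆ A i) :
    IsStackedOn I B :=
  fun i hi j hj hij x hx y hy => hA i hi j hj hij x (hBA i hi hx) y (hBA j hj hy)

theorem biUnion [LT ι] [LT κ] [LT α] {J : Set κ} {L : κ → Set α} {K : ι → Set κ}
    (hL : IsStackedOn J L) (hK : IsStackedOn I K) (hKJ : ∀ i ∈ I, K i ⊆ J) :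
    IsStackedOn I fun i => ⋃ k ∈ K i, L k := by
  intro i hi j hj hij x hx y hy
  obtain ⟨k, hk, hxk⟩ := mem_iUnion₂.1 hx
  obtain ⟨k', hk', hyk'⟩ := mem_iUnion₂.1 hy
  exact hL k (hKJ i hi hk) k' (hKJ j hj hk') (hK i hi j hj hij k hk k' hk') x hxk y hyk'

theorem index_le_of_le [LinearOrder ι] [Preorder α] {L : ι → Set α} (hL : IsStackedOn I L)
    {i j : ι} (hi : i ∈ I) (hj : j ∈ I) {x y : α} (hx : x ∈ L i) (hy : y ∈ L j) (hxy : x ≤ y) :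
    i ≤ j :=
  not_lt.1 fun hji => (hL j hj i hi hji y hy x hx).not_ge hxy

theorem nonempty_orderEmbedding_biUnion [LinearOrder ι] [LinearOrder α] [Preorder β]
    {A : ι → Set α} {B : ι → Set β} (hA : IsStackedOn I A) (hB : IsStackedOn I B)
    (g : ∀ i ∈ I, A i ↪o B i) : Nonempty ((⋃ i ∈ I, A i) ↪o (⋃ i ∈ I, B i)) := by
  have hmem (x : ⋃ i ∈ I, A i) : ∃ i, i ∈ I ∧ x.1 ∈ A i := by simpa using mem_iUnion₂.1 x.2
  choose idx hidx hxA using hmem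
  let G (x : ⋃ i ∈ I, A i) : B (idx x) := g (idx x) (hidx x) ⟨x, hxA x⟩
  refine ⟨.ofStrictMono (fun x => ⟨G x, mem_iUnion₂.2 ⟨idx x, hidx x, (G x).2⟩⟩) ?_⟩
  intro x y hxy
  rcases lt_trichotomy (idx x) (idx y) with h | h | h
  · exact hB _ (hidx x) _ (hidx y) h _ (G x).2 _ (G y).2
  · have key : ∀ i j (hi : i ∈ I) (hj : j ∈ I) (hx : x.1 ∈ A i) (hy : y.1 ∈ A j), i = j →
        (g i hi ⟨x, hx⟩ : β) < g j hj ⟨y, hy⟩ := by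
      rintro i _ hi _ _ _ rfl
      exact (g i hi).strictMono hxy
    exact key _ _ _ _ _ _ h
  · exact absurd (hA _ (hidx y) _ (hidx x) h _ (hxA y) _ (hxA x)) hxy.not_gt

end IsStackedOn

section Regular

universe u

variable {c : Cardinal.{u}}

theorem Cardinal.mk_Iio_lt_lift_of_lt_ord {γ : Ordinal.{u}} (hγ : γ < c.ord) :
    #(Iio γ) < Cardinal.lift.{u + 1} c := by
  rw [mk_Iio_ordinal]
  exact lift_lt.2 (lt_ord.1 hγ)

theorem Cardinal.IsRegular.sSup_lt_ord (hc : c.IsRegular) {s : Set Ordinal.{u}}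
    (hs : #s < Cardinal.lift.{u + 1} c) (hsc : s ⊆ Iio c.ord) : sSup s < c.ord :=
  Ordinal.sSup_lt_of_lt_cof (by rwa [← lift_cof, hc.cof_ord]) hsc

theorem Cardinal.IsRegular.exists_dominating (hc : c.IsRegular)
    (b : Ordinal.{u} → Ordinal.{u} → Ordinal.{u}) (hb : ∀ α < c.ord, ∀ η < c.ord, b α η < c.ord) :
    ∃ e : Ordinal → Ordinal, (∀ α < c.ord, e α < c.ord) ∧ ∀ α, ∀ β < α, b β (e β) ≤ e α := by
  let e : Ordinal → Ordinal := Ordinal.lt_wf.fix fun α ih => ⨆ β : Iio α, b β (ih β β.2)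
  have he (α) : e α = ⨆ β : Iio α, b β (e β) := Ordinal.lt_wf.fix_eq _ α
  refine ⟨e, fun α hα => ?_, fun α β hβ =>
    he α ▸ Ordinal.le_iSup (fun β : Iio α => b β (e β)) ⟨β, hβ⟩⟩
  induction α using WellFoundedLT.induction with
  | _ α ih =>
    rw [he]
    refine hc.sSup_lt_ord (mk_range_le.trans_lt (mk_Iio_lt_lift_of_lt_ord hα)) ?_
    rintro _ ⟨⟨β, hβ⟩, rfl⟩
    exact hb β (hβ.trans hα) _ (ih β hβ (hβ.trans hα))

theorem Cardinal.IsRegular.exists_isStackedOn (hc : c.IsRegular)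
    {K : Ordinal.{u} → Ordinal.{u} → Set Ordinal.{u}}
    (hK : ∀ α < c.ord, ∀ η < c.ord, K α η ⊆ Iio c.ord \ Iio η)
    (hKc : ∀ α < c.ord, ∀ η < c.ord, #(K α η) < Cardinal.lift.{u + 1} c) :
    ∃ e : Ordinal → Ordinal, (∀ α < c.ord, e α < c.ord) ∧
      IsStackedOn (Iio c.ord) fun α => K α (e α) := by
  have hsSup : ∀ α < c.ord, ∀ η < c.ord, sSup (K α η) < c.ord := fun α hα η hη =>
    hc.sSup_lt_ord (hKc α hα η hη) fun _ hx => (hK α hα η hη hx).1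
  obtain ⟨e, he, hdom⟩ := hc.exists_dominating (fun α η => Order.succ (sSup (K α η)))
    fun α hα η hη => (isSuccLimit_ord hc.aleph0_le).succ_lt (hsSup α hα η hη)
  refine ⟨e, he, fun i hi j hj hij x hx y hy => ?_⟩
  have hxK : x ≤ sSup (K i (e i)) :=
    le_csSup ⟨c.ord, fun _ hz => (hK i hi _ (he i hi) hz).1.le⟩ hx
  calc x < Order.succ (sSup (K i (e i))) := Order.lt_succ_of_le hxK
    _ ≤ e j := hdom j i hij
    _ ≤ y := not_lt.1 (hK j hj _ (he j hj) hy).2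

variable {a : Ordinal.{u}} {L : Ordinal.{u} → Set Ordinal.{u}} {C : Set Ordinal.{u}}

theorem exists_small_blocks_of_orderEmbedding (ha : IsPrincipal (· + ·) a) (hc : ℵ₀ ≤ c)
    (hL : IsStackedOn (Iio c.ord) L) (hne : ∀ α < c.ord, (L α).Nonempty)
    (hcover : ⋃ α ∈ Iio c.ord, L α = Iio a) (hC : C ⊆ Iio a) (E : Iio a ↪o C)
    {α η : Ordinal.{u}} (hα : α < c.ord) (hη : η < c.ord) :
    ∃ K, K ⊆ Iio c.ord \ Iio η ∧ #K < Cardinal.lift.{u + 1} c ∧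
      Nonempty (↥(L α) ↪o ↥((⋃ β ∈ K, L β) ∩ C)) := by
  have hblock : ∀ x < a, ∃ β < c.ord, x ∈ L β := fun x hx => by
    simpa using (hcover ▸ hx : x ∈ ⋃ α ∈ Iio c.ord, L α)
  have hsucc : Order.succ α < c.ord := (isSuccLimit_ord hc).succ_lt hα
  obtain ⟨y₀, hy₀⟩ := hne η hη
  obtain ⟨y₁, hy₁⟩ := hne _ hsucc
  have hLα : ∀ z ∈ L α, z < y₁ := fun z hz => hL α hα _ hsucc (Order.lt_succ α) z hz y₁ hy₁
  have hlt : ∀ β < c.ord, ∀ y ∈ L β, y < a := fun β hβ y hy =>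
    hcover.subset (mem_iUnion₂.2 ⟨β, hβ, hy⟩)
  have hshift : ∀ z ≤ y₁, y₀ + z < a := fun z hz =>
    ha (hlt η hη y₀ hy₀) (hz.trans_lt (hlt _ hsucc y₁ hy₁))
  have hle_apply : ∀ x : Iio a, (x : Ordinal) ≤ E x :=
    fun x => (OrderEmbedding.strictMono (E.trans (Set.inclusionOrderEmbedding hC))).le_apply
  let b : Ordinal := E ⟨y₀ + y₁, hshift y₁ le_rfl⟩
  obtain ⟨γ, hγ, hbγ⟩ := hblock b (hC (E _).2)
  refine ⟨Icc η γ, fun β hβ => ⟨hβ.2.trans_lt hγ, not_lt.2 hβ.1⟩, ?_, ?_⟩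
  · refine (mk_le_mk_of_subset ?_).trans_lt
      (mk_Iio_lt_lift_of_lt_ord ((isSuccLimit_ord hc).succ_lt hγ))
    rw [Order.Iio_succ]
    exact Icc_subset_Iic_self
  let F (z : L α) : Iio a := ⟨y₀ + z, hshift z (hLα z z.2).le⟩
  have hF : StrictMono F := fun z z' h =>
    show y₀ + z < y₀ + z' from add_lt_add_right (Subtype.coe_lt_coe.2 h) y₀
  refine ⟨.ofStrictMono (fun z => ⟨E (F z), ?_, (E (F z)).2⟩) fun _ _ h => E.strictMono (hF h)⟩
  obtain ⟨β, hβ, hzβ⟩ := hblock _ (hC (E (F z)).2)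
  have hy₀z : y₀ ≤ E (F z) := le_self_add.trans (hle_apply (F z))
  have hzb : (E (F z) : Ordinal) < b :=
    E.strictMono (show F z < ⟨y₀ + y₁, _⟩ from add_lt_add_right (hLα z z.2) y₀)
  exact mem_iUnion₂.2
    ⟨β, ⟨hL.index_le_of_le hη hβ hy₀ hzβ hy₀z, hL.index_le_of_le hβ hγ hzβ hbγ hzb.le⟩, hzβ⟩

theorem nonempty_orderEmbedding_of_forall_exists_small_blocks (hc : c.IsRegular)
    (hL : IsStackedOn (Iio c.ord) L) (hcover : ⋃ α ∈ Iio c.ord, L α = Iio a)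
    (H : ∀ α < c.ord, ∀ η < c.ord, ∃ K, K ⊆ Iio c.ord \ Iio η ∧ #K < Cardinal.lift.{u + 1} c ∧
      Nonempty (↥(L α) ↪o ↥((⋃ β ∈ K, L β) ∩ C))) :
    Nonempty (Iio a ↪o C) := by
  choose! K hKsub hKcard hKemb using H
  obtain ⟨e, he, hstack⟩ := hc.exists_isStackedOn hKsub hKcard
  let B (α : Ordinal) : Set Ordinal := (⋃ β ∈ K α (e α), L β) ∩ C
  have hB : IsStackedOn (Iio c.ord) B :=
    (hL.biUnion hstack fun α hα => fun _ hβ => (hKsub α hα _ (he α hα) hβ).1).mono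
      fun _ _ => inter_subset_left
  obtain ⟨G⟩ := hL.nonempty_orderEmbedding_biUnion hB fun α hα => (hKemb α hα _ (he α hα)).some
  rw [hcover] at G
  exact ⟨G.trans (Set.inclusionOrderEmbedding (iUnion₂_subset fun _ _ => inter_subset_right))⟩

end Regular

theorem stmt11_general (δ : Ordinal.{0}) (hδ : 0 < δ) (κc : Cardinal.{0})
    (hκ : (ω ^ δ).cof = κc)
    (δf : Ordinal → Ordinal)
    (Lset : Ordinal → Set Ordinal)
    (hconv : ∀ α < κc.ord, ∀ β < κc.ord, α < β →
      ∀ x ∈ Lset α, ∀ y ∈ Lset β, x < y)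
    (hiso : ∀ α < κc.ord, Nonempty (↥(Lset α) ≃o ↥(Set.Iio (ω ^ δf α))))
    (hunion : ⋃ α ∈ Set.Iio κc.ord, Lset α = Set.Iio (ω ^ δ))
    (C : Set Ordinal) (hCsub : C ⊆ Set.Iio (ω ^ δ)) :
    C ∈ Copies (ω ^ δ) ↔
      ∀ α < κc.ord, ∀ η < κc.ord, ∃ K : Set Ordinal,
        K ⊆ Set.Iio κc.ord \ Set.Iio η ∧
        Cardinal.mk ↥K < Cardinal.lift.{1} κc ∧
        Nonempty (↥(Lset α) ↪o ↥((⋃ β ∈ K, Lset β) ∩ C)) := by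
  have hreg : κc.IsRegular := hκ ▸ isRegular_cof (isSuccLimit_opow_left isSuccLimit_omega0 hδ.ne')
  have hne : ∀ α < κc.ord, (Lset α).Nonempty := fun α hα =>
    let ⟨e⟩ := hiso α hα
    ⟨_, (e.symm ⟨0, opow_pos _ omega0_pos⟩).2⟩
  rw [mem_copies_iff hCsub]
  exact ⟨fun ⟨E⟩ _ hα _ hη => exists_small_blocks_of_orderEmbedding
      (isPrincipal_add_omega0_opow δ) hreg.aleph0_le hconv hne hunion hCsub E hα hη,
    nonempty_orderEmbedding_of_forall_exists_small_blocks hreg hconv hunion⟩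

/-- Setting: `κ = cf(ω^δ)`, `⟨δ_α : α<κ⟩` a nondecreasing sequence of nonzero
ordinals with `Σ_{α<κ} ω^{δ_α} = ω^δ`, realized by a partition of `[0, ω^δ)` into
consecutive intervals `L_α` of order type `ω^{δ_α}`. Then `C ⊆ L` is a copy of `L`
iff for all `α, η < κ` there is `K ⊆ κ ∖ η` with `|K| < κ` such that `L_α`
order-embeds into `(⋃_{β∈K} L_β) ∩ C`. -/
theorem stmt11 (δ : Ordinal.{0}) (hδ : 0 < δ) (κc : Cardinal.{0})
    (hκ : (ω ^ δ).cof = κc)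
    (δf : Ordinal → Ordinal)
    (hpos : ∀ α < κc.ord, 0 < δf α)
    (hmono : ∀ α β : Ordinal, α ≤ β → β < κc.ord → δf α ≤ δf β)
    (Lset : Ordinal → Set Ordinal)
    (hconv : ∀ α < κc.ord, ∀ β < κc.ord, α < β →
      ∀ x ∈ Lset α, ∀ y ∈ Lset β, x < y)
    (hiso : ∀ α < κc.ord, Nonempty (↥(Lset α) ≃o ↥(Set.Iio (ω ^ δf α))))
    (hunion : ⋃ α ∈ Set.Iio κc.ord, Lset α = Set.Iio (ω ^ δ))
    (C : Set Ordinal) (hCsub : C ⊆ Set.Iio (ω ^ δ)) :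
    C ∈ Copies (ω ^ δ) ↔
      ∀ α < κc.ord, ∀ η < κc.ord, ∃ K : Set Ordinal,
        K ⊆ Set.Iio κc.ord \ Set.Iio η ∧
        Cardinal.mk ↥K < Cardinal.lift.{1} κc ∧
        Nonempty (↥(Lset α) ↪o ↥((⋃ β ∈ K, Lset β) ∩ C)) :=
  stmt11_general δ hδ κc hκ δf Lset hconv hiso hunion C hCsub
end

section
/- If δ > 0 is a successor ordinal or cf(δ) = ω, then there exists a complete embedding of the preorder ⟨[ω]^ω, ⊆*⟩ (infinite sets of natural numbers ordered by almost-inclusion: S ⊆* T iff S ∖ T is finite) into the preorder ⟨P(ω^δ), ⊆_I⟩ of copies of ω^δ ordered by inclusion modulo the ideal I_{ω^δ}. -/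
/-
Cut `ω ^ δ` into consecutive blocks `[b n, b (n + 1))` and send `S ⊆ ℕ` to the union of the
blocks indexed by `S`. Everything rests on one description of the ideal: a set `X ⊆ ω ^ δ` has
order type `< ω ^ δ` (i.e. lies in `I_{ω^δ}`) iff, for one of countably many additively principal
thresholds `c k`, all but finitely many blocks meet `X` in order type `< c k` (ordinal sums of
pieces below a principal ordinal stay below it; conversely infinitely many large pieces add up to
every `c k * m`). If `δ = β + 1` the blocks are `[ω ^ β * n, ω ^ β * (n + 1))` with the single
threshold `ω ^ β`; if `cf δ = ω`, blocks and thresholds both come from `ω ^ γ n` for a cofinal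
sequence `γ n → δ`. Then `S ⊆* T` turns into `⊆_I`, almost disjoint sets give incompatible
copies, and below a copy `A` one picks blocks `n₀ < n₁ < ⋯` on which `A` has order type
`≥ c k`: `A ∩ f M` is still a copy for every infinite `M ⊆ {n₀, n₁, …}`.
-/

open Ordinal Set Cardinal

/-- `A ⊆_I B` : `A ∖ B ∈ I_{ω^δ}`, i.e. `ω^δ` does not order-embed into `A ∖ B`. -/
def leI (a : Ordinal.{0}) (A B : Set Ordinal.{0}) : Prop :=
  ¬ Nonempty (↥(Set.Iio a) ↪o ↥(A \ B))

/-- `S ⊆* T` on `[ω]^ω` : `S ∖ T` is finite. -/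
def leStarNat (S T : Set ℕ) : Prop := (S \ T).Finite

open Filter

universe u

section OrderType
variable {α : Type u} [LinearOrder α] [WellFoundedLT α]

theorem typeLT_le_iff_nonempty_orderEmbedding {β : Type u} [LinearOrder β] [WellFoundedLT β] :
    typeLT α ≤ typeLT β ↔ Nonempty (α ↪o β) := by
  rw [type_le_iff']
  exact ⟨fun ⟨f⟩ => ⟨.orderEmbeddingOfLTEmbedding f⟩, fun ⟨f⟩ => ⟨f.ltEmbedding⟩⟩

theorem typeLT_union_of_forall_lt {s t : Set α} (h : ∀ x ∈ s, ∀ y ∈ t, x < y) :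
    typeLT ↥(s ∪ t) = typeLT s + typeLT t := by
  classical
  have hdisj : Disjoint s t :=
    Set.disjoint_left.2 fun x hs ht => lt_irrefl x (h x hs x ht)
  rw [← type_sum_lex]
  refine (RelIso.ordinalType_congr ⟨(Equiv.Set.union hdisj).symm, ?_⟩).symm
  rintro (a | a) (b | b)
  · simp [Subtype.coe_lt_coe]
  · simpa using h a a.2 b b.2
  · simpa using (h b b.2 a a.2).le
  · simp [Subtype.coe_lt_coe]

theorem typeLT_inter_Iio_add_typeLT_inter_Ico (s : Set α) {a b : α} (hab : a ≤ b) :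
    typeLT ↥(s ∩ Iio a) + typeLT ↥(s ∩ Ico a b) = typeLT ↥(s ∩ Iio b) := by
  rw [← typeLT_union_of_forall_lt fun x hx y hy => hx.2.trans_le hy.2.1, ← inter_union_distrib_left,
    Iio_union_Ico_eq_Iio hab]

theorem typeLT_le_of_forall_typeLT_inter_Iio_lt {s : Set α} {c : Ordinal.{u}}
    (h : ∀ x ∈ s, typeLT ↥(s ∩ Iio x) < c) : typeLT s ≤ c := by
  by_contra! hc
  obtain ⟨x, hx⟩ := typein_surj (α := s) (· < ·) hc
  refine (h x x.2).ne' (hx.symm.trans ?_)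
  rw [← type_Iio_lt]
  exact OrderIso.ordinalType_congr
    { toFun := fun y => ⟨y.1.1, y.1.2, y.2⟩
      invFun := fun z => ⟨⟨z.1, z.2.1⟩, z.2.2⟩
      left_inv := fun _ => rfl
      right_inv := fun _ => rfl
      map_rel_iff' := Iff.rfl }

end OrderType

theorem Ordinal.IsPrincipal.lift {a : Ordinal.{u}} (h : IsPrincipal (· + ·) a) :
    IsPrincipal (· + ·) (Ordinal.lift.{u + 1} a) := by
  intro x y hx hy
  obtain ⟨x, -, rfl⟩ := Ordinal.lt_lift_iff.1 hx
  obtain ⟨y, -, rfl⟩ := Ordinal.lt_lift_iff.1 hy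
  simpa only [← Ordinal.lift_add, Ordinal.lift_lt] using
    h (Ordinal.lift_lt.1 hx) (Ordinal.lift_lt.1 hy)

theorem Ordinal.IsPrincipal.add_lt_add {a b c d : Ordinal.{u}} (hc : IsPrincipal (· + ·) c)
    (ha : a < b + c) (hd : d < c) : a + d < b + c := by
  rcases lt_or_ge a b with hab | hba
  · calc a + d ≤ b + d := by gcongr
      _ < b + c := by gcongr
  · rw [← Ordinal.add_sub_cancel_of_le hba] at ha ⊢
    rw [add_assoc]
    gcongr
    exact hc (lt_of_add_lt_add_left ha) hd

theorem exists_lt_omega0_opow_mul {β x : Ordinal.{u}} (hx : x < ω ^ (β + 1)) :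
    ∃ n : ℕ, x < ω ^ β * n := by
  rw [opow_add, opow_one] at hx
  obtain ⟨_, hc, hxc⟩ := (lt_mul_iff_of_isSuccLimit isSuccLimit_omega0).1 hx
  obtain ⟨n, rfl⟩ := lt_omega0.1 hc
  exact ⟨n, hxc⟩

/-- Consecutive blocks `[b n, b (n + 1))` cofinal in `Λ`, with thresholds `c k` such that the
finite multiples of the `c k` are cofinal in `Λ` while each `c k` fits into almost every block. -/
structure BlockScale (Λ : Ordinal.{u}) where
  b : ℕ → Ordinal.{u}
  c : ℕ → Ordinal.{u}
  isPrincipal_add : IsPrincipal (· + ·) Λ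
  monotone_b : Monotone b
  b_lt : ∀ n, b n < Λ
  exists_lt_b : ∀ x < Λ, ∃ n, x < b n
  isPrincipal_add_c : ∀ k, IsPrincipal (· + ·) (c k)
  monotone_c : Monotone c
  exists_lt_c_mul : ∀ x < Λ, ∃ k, ∃ m : ℕ, x < c k * m
  eventually_add_c_le : ∀ k, ∀ᶠ n in atTop, b n + c k ≤ b (n + 1)

namespace BlockScale

variable {Λ : Ordinal.{u}} (s : BlockScale Λ)

def block (n : ℕ) : Set Ordinal.{u} := Ico (s.b n) (s.b (n + 1))

def copy (S : Set ℕ) : Set Ordinal.{u} := ⋃ n ∈ S, s.block n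

theorem block_subset_Iio (n : ℕ) : s.block n ⊆ Iio Λ :=
  fun _ hx => hx.2.trans (s.b_lt _)

theorem eq_of_mem_block {x : Ordinal.{u}} {m n : ℕ} (hm : x ∈ s.block m) (hn : x ∈ s.block n) :
    m = n := by
  by_contra! hmn
  rcases hmn.lt_or_gt with h | h
  · exact (hm.2.trans_le (s.monotone_b h)).not_ge hn.1
  · exact (hn.2.trans_le (s.monotone_b h)).not_ge hm.1

theorem mem_copy {S : Set ℕ} {x : Ordinal.{u}} : x ∈ s.copy S ↔ ∃ n ∈ S, x ∈ s.block n := by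
  simp [copy]

theorem copy_subset_Iio (S : Set ℕ) : s.copy S ⊆ Iio Λ :=
  iUnion₂_subset fun n _ => s.block_subset_Iio n

theorem copy_subset_copy {S T : Set ℕ} (h : S ⊆ T) : s.copy S ⊆ s.copy T :=
  biUnion_subset_biUnion_left h

theorem block_subset_copy {S : Set ℕ} {n : ℕ} (hn : n ∈ S) : s.block n ⊆ s.copy S :=
  subset_biUnion_of_mem (u := s.block) hn

theorem mem_copy_iff_of_mem_block {S : Set ℕ} {n : ℕ} {x : Ordinal.{u}} (hx : x ∈ s.block n) :
    x ∈ s.copy S ↔ n ∈ S := by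
  refine ⟨fun h => ?_, fun hn => s.block_subset_copy hn hx⟩
  obtain ⟨m, hm, hxm⟩ := s.mem_copy.1 h
  rwa [s.eq_of_mem_block hx hxm]

theorem inter_block_subset_sdiff_copy {X : Set Ordinal.{u}} {U : Set ℕ} {n : ℕ} (hn : n ∉ U) :
    X ∩ s.block n ⊆ (X \ s.copy U) ∩ s.block n := fun _ hx =>
  ⟨⟨hx.1, by rwa [s.mem_copy_iff_of_mem_block hx.2]⟩, hx.2⟩

theorem pos (s : BlockScale Λ) : 0 < Λ := bot_le.trans_lt (s.b_lt 0)

theorem c_lt (k : ℕ) : s.c k < Λ := by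
  obtain ⟨n, hn⟩ := (s.eventually_add_c_le k).exists
  exact le_add_self.trans_lt (hn.trans_lt (s.b_lt _))

theorem typeLT_inter_Iio_b_add (X : Set Ordinal.{u}) (n : ℕ) :
    typeLT ↥(X ∩ Iio (s.b n)) + typeLT ↥(X ∩ s.block n) = typeLT ↥(X ∩ Iio (s.b (n + 1))) :=
  typeLT_inter_Iio_add_typeLT_inter_Ico X (s.monotone_b n.le_succ)

theorem eventually_lift_c_le_typeLT_block (k : ℕ) :
    ∀ᶠ n in atTop, Ordinal.lift.{u + 1} (s.c k) ≤ typeLT ↥(s.block n) := by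
  filter_upwards [s.eventually_add_c_le k] with n hn
  have hsum := s.typeLT_inter_Iio_b_add univ n
  rw [univ_inter, univ_inter, univ_inter, type_lt_Iio, type_lt_Iio] at hsum
  rw [← add_le_add_iff_left (Ordinal.lift.{u + 1} (s.b n)), hsum, ← Ordinal.lift_add,
    Ordinal.lift_le]
  exact hn

theorem typeLT_lt_of_eventually_lt {X : Set Ordinal.{u}} (hX : X ⊆ Iio Λ) {k : ℕ}
    (h : ∀ᶠ n in atTop, typeLT ↥(X ∩ s.block n) < Ordinal.lift.{u + 1} (s.c k)) :
    typeLT X < Ordinal.lift.{u + 1} Λ := by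
  obtain ⟨N, hN⟩ := eventually_atTop.1 h
  set bound := Ordinal.lift.{u + 1} (s.b N) + Ordinal.lift.{u + 1} (s.c k)
  have hc := (s.isPrincipal_add_c k).lift
  have hinit : ∀ j, typeLT ↥(X ∩ Iio (s.b (N + j))) < bound := by
    intro j
    induction j with
    | zero =>
      calc typeLT ↥(X ∩ Iio (s.b N)) ≤ typeLT ↥(Iio (s.b N)) := type_mono inter_subset_right
        _ = Ordinal.lift.{u + 1} (s.b N) := type_lt_Iio _
        _ < bound := lt_add_of_pos_right _ (bot_le.trans_lt (hN N le_rfl))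
    | succ j ih =>
      rw [← add_assoc, ← s.typeLT_inter_Iio_b_add]
      exact hc.add_lt_add ih (hN _ (Nat.le_add_right N j))
  calc typeLT X ≤ bound := typeLT_le_of_forall_typeLT_inter_Iio_lt fun x hx => by
        obtain ⟨n, hn⟩ := s.exists_lt_b x (hX hx)
        have hxb : x < s.b (N + n) := hn.trans_le (s.monotone_b (Nat.le_add_left n N))
        exact (type_mono (inter_subset_inter_right X (Iio_subset_Iio hxb.le))).trans_lt (hinit n)
    _ < Ordinal.lift.{u + 1} Λ := s.isPrincipal_add.lift (Ordinal.lift_lt.2 (s.b_lt N))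
        (Ordinal.lift_lt.2 (s.c_lt k))

theorem lift_le_typeLT_of_frequently_le {X : Set Ordinal.{u}}
    (h : ∀ k, ∃ᶠ n in atTop, Ordinal.lift.{u + 1} (s.c k) ≤ typeLT ↥(X ∩ s.block n)) :
    Ordinal.lift.{u + 1} Λ ≤ typeLT X := by
  by_contra! hX
  obtain ⟨x, hxΛ, hx⟩ := Ordinal.lt_lift_iff.1 hX
  obtain ⟨k, m, hlt⟩ := s.exists_lt_c_mul x hxΛ
  have hmul : ∀ j : ℕ, ∃ N, Ordinal.lift.{u + 1} (s.c k) * j ≤ typeLT ↥(X ∩ Iio (s.b N)) := by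
    intro j
    induction j with
    | zero => exact ⟨0, by simp⟩
    | succ j ih =>
      obtain ⟨N, hN⟩ := ih
      obtain ⟨n, hNn, hn⟩ := frequently_atTop.1 (h k) N
      refine ⟨n + 1, ?_⟩
      rw [← s.typeLT_inter_Iio_b_add, Nat.cast_succ, mul_add_one]
      exact add_le_add
        (hN.trans (type_mono (inter_subset_inter_right X (Iio_subset_Iio (s.monotone_b hNn))))) hn
  obtain ⟨N, hN⟩ := hmul m
  refine (Ordinal.lift_lt.{u + 1}.2 hlt).not_ge ?_
  rw [Ordinal.lift_mul, Ordinal.lift_natCast, hx]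
  exact hN.trans (type_mono inter_subset_left)

theorem typeLT_lt_lift_iff {X : Set Ordinal.{u}} (hX : X ⊆ Iio Λ) :
    typeLT X < Ordinal.lift.{u + 1} Λ ↔
      ∃ k, ∀ᶠ n in atTop, typeLT ↥(X ∩ s.block n) < Ordinal.lift.{u + 1} (s.c k) := by
  refine ⟨fun hlt => ?_, fun ⟨k, hk⟩ => s.typeLT_lt_of_eventually_lt hX hk⟩
  by_contra! h
  exact hlt.not_ge (s.lift_le_typeLT_of_frequently_le fun k => by simpa using h k)

theorem lift_le_typeLT_iff {X : Set Ordinal.{u}} (hX : X ⊆ Iio Λ) :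
    Ordinal.lift.{u + 1} Λ ≤ typeLT X ↔
      ∀ k, ∃ᶠ n in atTop, Ordinal.lift.{u + 1} (s.c k) ≤ typeLT ↥(X ∩ s.block n) := by
  rw [← not_lt, s.typeLT_lt_lift_iff hX]
  simp only [not_exists, Filter.not_eventually, not_lt]

def ofStrictMono (hΛ : IsPrincipal (· + ·) Λ) (a : ℕ → Ordinal.{u})
    (ha : StrictMono a) (isPrincipal_add_a : ∀ n, IsPrincipal (· + ·) (a n))
    (a_lt : ∀ n, a n < Λ) (exists_lt_a : ∀ x < Λ, ∃ n, x < a n) : BlockScale Λ where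
  b := a
  c := a
  isPrincipal_add := hΛ
  monotone_b := ha.monotone
  b_lt := a_lt
  exists_lt_b := exists_lt_a
  isPrincipal_add_c := isPrincipal_add_a
  monotone_c := ha.monotone
  exists_lt_c_mul x hx :=
    let ⟨n, hn⟩ := exists_lt_a x hx
    ⟨n, 1, by rwa [Nat.cast_one, mul_one]⟩
  eventually_add_c_le k := eventually_atTop.2 ⟨k, fun n hn =>
    calc a n + a k ≤ a n + a (n + 1) := by gcongr; exact ha.monotone (hn.trans n.le_succ)
      _ = a (n + 1) := (isPrincipal_add_a _).add_eq_right (ha n.lt_succ_self)⟩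

theorem nonempty_of_cof_eq_aleph0 {δ : Ordinal.{u}} (hδ : δ.cof = ℵ₀) :
    Nonempty (BlockScale (ω ^ δ)) := by
  have hlim : Order.IsSuccLimit δ := one_lt_cof_iff.1 (hδ ▸ one_lt_aleph0)
  obtain ⟨f, hf⟩ := exists_isFundamentalSeq (o := δ) (a := ω) (by rw [hδ, ord_aleph0])
  have hγ : StrictMono fun n : ℕ => (f ⟨n, natCast_lt_omega0 n⟩).1 :=
    fun m n h => hf.strictMono (Subtype.mk_lt_mk.2 (Nat.cast_lt.2 h))
  refine ⟨ofStrictMono (isPrincipal_add_omega0_opow δ) _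
    ((isNormal_opow one_lt_omega0).strictMono.comp hγ) (fun n => isPrincipal_add_omega0_opow _)
    (fun n => (opow_lt_opow_iff_right one_lt_omega0).2 (f _).2) fun x hx => ?_⟩
  obtain ⟨e, he, hxe⟩ := (lt_opow_of_isSuccLimit omega0_ne_zero hlim).1 hx
  obtain ⟨_, ⟨⟨i, hi⟩, rfl⟩, hei⟩ := hf.isCofinal_range ⟨e, he⟩
  obtain ⟨n, rfl⟩ := lt_omega0.1 hi
  exact ⟨n, hxe.trans_le (opow_le_opow_right omega0_pos hei)⟩

noncomputable def omega0OpowAddOne (β : Ordinal.{u}) : BlockScale (ω ^ (β + 1)) where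
  b n := ω ^ β * n
  c _ := ω ^ β
  isPrincipal_add := isPrincipal_add_omega0_opow _
  monotone_b m n h := mul_le_mul' le_rfl (Nat.cast_le.2 h)
  b_lt n := by
    rw [opow_add, opow_one]
    exact mul_lt_mul_of_pos_left (natCast_lt_omega0 n) (opow_pos _ omega0_pos)
  exists_lt_b _ := exists_lt_omega0_opow_mul
  isPrincipal_add_c _ := isPrincipal_add_omega0_opow β
  monotone_c := monotone_const
  exists_lt_c_mul _ hx := ⟨0, exists_lt_omega0_opow_mul hx⟩
  eventually_add_c_le _ := .of_forall fun n => by rw [Nat.cast_succ, mul_add_one]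

end BlockScale

theorem leI_iff {a : Ordinal.{0}} {A B : Set Ordinal.{0}} :
    leI a A B ↔ typeLT ↥(A \ B) < Ordinal.lift.{1} a := by
  rw [leI, ← type_lt_Iio, ← not_le, typeLT_le_iff_nonempty_orderEmbedding]

theorem leI_of_subset {a : Ordinal.{0}} (ha : 0 < a) {A B : Set Ordinal.{0}} (h : A ⊆ B) :
    leI a A B := by
  rw [leI_iff, sdiff_eq_empty.2 h, type_eq_zero_of_empty]
  simpa only [Ordinal.lift_zero] using Ordinal.lift_lt.{1}.2 ha

theorem mem_copies_iff_s18 {a : Ordinal.{0}} {A : Set Ordinal.{0}} :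
    A ∈ Copies a ↔ A ⊆ Iio a ∧ Ordinal.lift.{1} a ≤ typeLT A := by
  constructor
  · rintro ⟨f, rfl⟩
    rw [← range_comp, ← type_lt_Iio]
    have hf : StrictMono (Subtype.val ∘ f) := Subtype.strictMono_coe _ |>.comp f.strictMono
    exact ⟨range_subset_iff.2 fun x => (f x).2, (hf.orderIso _).ordinalType_congr.le⟩
  · rintro ⟨hsub, hle⟩
    have heq : typeLT ↥(Iio a) = typeLT A :=
      (type_lt_Iio a).trans (hle.antisymm ((type_mono hsub).trans_eq (type_lt_Iio a)))
    obtain ⟨g⟩ := type_eq.1 heq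
    let g' := OrderIso.ofRelIsoLT g
    refine ⟨.ofStrictMono (fun x => ⟨g' x, hsub (g' x).2⟩) fun x y h => g'.strictMono h, ?_⟩
    rw [← range_comp]
    change A = range (Subtype.val ∘ g')
    rw [range_comp, g'.range_eq, image_univ, Subtype.range_coe]

theorem infinite_inter_of_leStarNat {R S : Set ℕ} (hR : R.Infinite) (h : leStarNat R S) :
    (R ∩ S).Infinite := by
  simpa only [sdiff_sdiff_right_self] using hR.sdiff h

theorem exists_infinite_leStarNat_iff {S T : Set ℕ} :
    (∃ R : Set ℕ, R.Infinite ∧ leStarNat R S ∧ leStarNat R T) ↔ (S ∩ T).Infinite := by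
  refine ⟨fun ⟨R, hR, hRS, hRT⟩ => ?_, fun h => ⟨S ∩ T, h, ?_, ?_⟩⟩
  · have hRST := infinite_inter_of_leStarNat (infinite_inter_of_leStarNat hR hRS)
      (hRT.subset (sdiff_subset_sdiff_left inter_subset_left))
    exact hRST.mono fun n hn => ⟨hn.1.2, hn.2⟩
  · rw [leStarNat, sdiff_eq_empty.2 inter_subset_left]
    exact finite_empty
  · rw [leStarNat, sdiff_eq_empty.2 inter_subset_right]
    exact finite_empty

namespace BlockScale

variable {Λ : Ordinal.{0}} (s : BlockScale Λ)

theorem copy_mem_copies {S : Set ℕ} (hS : S.Infinite) : s.copy S ∈ Copies Λ := by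
  refine mem_copies_iff_s18.2 ⟨s.copy_subset_Iio S, s.lift_le_typeLT_of_frequently_le fun k => ?_⟩
  refine ((Nat.frequently_atTop_iff_infinite.2 hS).and_eventually
    (s.eventually_lift_c_le_typeLT_block k)).mono ?_
  rintro n ⟨hn, hc⟩
  rwa [inter_eq_right.2 (s.block_subset_copy hn)]

theorem leI_copy_of_leStarNat {S T : Set ℕ} (h : leStarNat S T) :
    leI Λ (s.copy S) (s.copy T) := by
  obtain ⟨N, hN⟩ := h.bddAbove
  have hsub : s.copy S \ s.copy T ⊆ Iio (s.b (N + 1)) := by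
    rintro x ⟨hxS, hxT⟩
    obtain ⟨n, hnS, hx⟩ := s.mem_copy.1 hxS
    have hnT : n ∉ T := fun hnT => hxT (s.block_subset_copy hnT hx)
    exact hx.2.trans_le (s.monotone_b (Nat.succ_le_succ (hN ⟨hnS, hnT⟩)))
  rw [leI_iff]
  calc typeLT ↥(s.copy S \ s.copy T) ≤ typeLT ↥(Iio (s.b (N + 1))) := type_mono hsub
    _ = Ordinal.lift.{1} (s.b (N + 1)) := type_lt_Iio _
    _ < Ordinal.lift.{1} Λ := Ordinal.lift_lt.2 (s.b_lt _)

theorem exists_copies_leI_copy_iff {S T : Set ℕ} :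
    (∃ D ∈ Copies Λ, leI Λ D (s.copy S) ∧ leI Λ D (s.copy T)) ↔ (S ∩ T).Infinite := by
  refine ⟨fun ⟨D, hD, hDS, hDT⟩ => ?_, fun h => ⟨s.copy (S ∩ T), s.copy_mem_copies h,
    leI_of_subset s.pos (s.copy_subset_copy inter_subset_left),
    leI_of_subset s.pos (s.copy_subset_copy inter_subset_right)⟩⟩
  by_contra hfin
  obtain ⟨N, hN⟩ := (not_infinite.1 hfin).bddAbove
  obtain ⟨hDsub, hDlarge⟩ := mem_copies_iff_s18.1 hD
  rw [leI_iff, s.typeLT_lt_lift_iff (sdiff_subset.trans hDsub)] at hDS hDT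
  obtain ⟨k₁, h₁⟩ := hDS
  obtain ⟨k₂, h₂⟩ := hDT
  refine hDlarge.not_gt (s.typeLT_lt_of_eventually_lt hDsub (k := max k₁ k₂) ?_)
  filter_upwards [h₁, h₂, eventually_gt_atTop N] with n hn₁ hn₂ hnN
  rcases not_and_or.1 fun h => (hN h).not_gt hnN with hnS | hnT
  · exact (type_mono (s.inter_block_subset_sdiff_copy hnS)).trans_lt
      (hn₁.trans_le (Ordinal.lift_le.2 (s.monotone_c (le_max_left _ _))))
  · exact (type_mono (s.inter_block_subset_sdiff_copy hnT)).trans_lt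
      (hn₂.trans_le (Ordinal.lift_le.2 (s.monotone_c (le_max_right _ _))))

theorem exists_forall_exists_copies_subset {A : Set Ordinal.{0}} (hA : A ∈ Copies Λ) :
    ∃ S : Set ℕ, S.Infinite ∧ ∀ S' : Set ℕ, S'.Infinite → leStarNat S' S →
      ∃ D ∈ Copies Λ, D ⊆ s.copy S' ∧ D ⊆ A := by
  obtain ⟨hAsub, hAlarge⟩ := mem_copies_iff_s18.1 hA
  obtain ⟨φ, hφ, hφA⟩ := extraction_forall_of_frequently ((s.lift_le_typeLT_iff hAsub).1 hAlarge)
  refine ⟨range φ, infinite_range_of_injective hφ.injective, fun S' hS' hS'φ => ?_⟩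
  have hM : (S' ∩ range φ).Infinite := infinite_inter_of_leStarNat hS' hS'φ
  refine ⟨A ∩ s.copy (S' ∩ range φ), mem_copies_iff_s18.2 ⟨inter_subset_left.trans hAsub, ?_⟩,
    inter_subset_right.trans (s.copy_subset_copy inter_subset_left), inter_subset_left⟩
  refine (s.lift_le_typeLT_iff (inter_subset_left.trans hAsub)).2 fun k => ?_
  refine ((Nat.frequently_atTop_iff_infinite.2 hM).and_eventually
    (eventually_ge_atTop (φ k))).mono ?_
  rintro _ ⟨hjM, hkj⟩
  obtain ⟨j, rfl⟩ := hjM.2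
  replace hjM : φ j ∈ S' ∩ range φ := hjM
  calc Ordinal.lift.{1} (s.c k) ≤ Ordinal.lift.{1} (s.c j) :=
        Ordinal.lift_le.2 (s.monotone_c (hφ.le_iff_le.1 hkj))
    _ ≤ typeLT ↥(A ∩ s.block (φ j)) := hφA j
    _ = typeLT ↥(A ∩ s.copy (S' ∩ range φ) ∩ s.block (φ j)) := by
        rw [inter_assoc, inter_eq_right.2 (s.block_subset_copy hjM)]

end BlockScale

theorem stmt18_general (δ : Ordinal.{0})
    (hcase : (∃ β : Ordinal, δ = β + 1) ∨ δ.cof = ℵ₀) :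
    ∃ f : Set ℕ → Set Ordinal.{0},
      -- f maps [ω]^ω into P(ω^δ)
      (∀ S : Set ℕ, S.Infinite → f S ∈ Copies (ω ^ δ)) ∧
      -- (ce1)
      (∀ S T : Set ℕ, S.Infinite → T.Infinite →
        leStarNat S T → leI (ω ^ δ) (f S) (f T)) ∧
      -- (ce2)
      (∀ S T : Set ℕ, S.Infinite → T.Infinite →
        ((¬ ∃ R : Set ℕ, R.Infinite ∧ leStarNat R S ∧ leStarNat R T) ↔
          ¬ ∃ D ∈ Copies (ω ^ δ), leI (ω ^ δ) D (f S) ∧ leI (ω ^ δ) D (f T))) ∧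
      -- (ce3)
      (∀ A ∈ Copies (ω ^ δ), ∃ S : Set ℕ, S.Infinite ∧
        ∀ S' : Set ℕ, S'.Infinite → leStarNat S' S →
          ∃ D ∈ Copies (ω ^ δ), leI (ω ^ δ) D (f S') ∧ leI (ω ^ δ) D A) := by
  obtain ⟨s⟩ : Nonempty (BlockScale (ω ^ δ)) := by
    rcases hcase with ⟨β, rfl⟩ | hδ
    exacts [⟨.omega0OpowAddOne β⟩, BlockScale.nonempty_of_cof_eq_aleph0 hδ]
  refine ⟨s.copy, fun S => s.copy_mem_copies, fun S T _ _ => s.leI_copy_of_leStarNat,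
    fun S T _ _ => by rw [exists_infinite_leStarNat_iff, s.exists_copies_leI_copy_iff],
    fun A hA => ?_⟩
  obtain ⟨S, hS, hdense⟩ := s.exists_forall_exists_copies_subset hA
  refine ⟨S, hS, fun S' hS' hS'S => ?_⟩
  obtain ⟨D, hD, hDS', hDA⟩ := hdense S' hS' hS'S
  exact ⟨D, hD, leI_of_subset s.pos hDS', leI_of_subset s.pos hDA⟩

/-- If `δ > 0` is a successor ordinal or `cf(δ) = ω`, then there is a complete
embedding of `⟨[ω]^ω, ⊆*⟩` (infinite sets of naturals under almost-inclusion) into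
`⟨P(ω^δ), ⊆_I⟩`. -/
theorem stmt18 (δ : Ordinal.{0}) (hδ : 0 < δ)
    (hcase : (∃ β : Ordinal, δ = β + 1) ∨ δ.cof = ℵ₀) :
    ∃ f : Set ℕ → Set Ordinal.{0},
      -- f maps [ω]^ω into P(ω^δ)
      (∀ S : Set ℕ, S.Infinite → f S ∈ Copies (ω ^ δ)) ∧
      -- (ce1)
      (∀ S T : Set ℕ, S.Infinite → T.Infinite →
        leStarNat S T → leI (ω ^ δ) (f S) (f T)) ∧
      -- (ce2)
      (∀ S T : Set ℕ, S.Infinite → T.Infinite →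
        ((¬ ∃ R : Set ℕ, R.Infinite ∧ leStarNat R S ∧ leStarNat R T) ↔
          ¬ ∃ D ∈ Copies (ω ^ δ), leI (ω ^ δ) D (f S) ∧ leI (ω ^ δ) D (f T))) ∧
      -- (ce3)
      (∀ A ∈ Copies (ω ^ δ), ∃ S : Set ℕ, S.Infinite ∧
        ∀ S' : Set ℕ, S'.Infinite → leStarNat S' S →
          ∃ D ∈ Copies (ω ^ δ), leI (ω ^ δ) D (f S') ∧ leI (ω ^ δ) D A) :=
  stmt18_general δ hcase
end
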